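/- Let s_n be the 'comb' tree over a binary symbol f and constants, with nodes [2]^i for 0 ≤ i ≤ 2^n and [2]^i[1] for 0 ≤ i < 2^n, inner nodes labeled f and leaves labeled according to l(i) mod 5 plus l(2^n). Then for any digram of the form (f, 1, x) with x ∈ {a,b,c,d,e}, the number of (non-overlapping) occurrences is at most ⌈2^n / 5⌉, while the digram (f, 2, f) has exactly 2^{n-1} non-overlapping occurrences (for n ≥ 3, 2^{n-1} > ⌈2^n/5⌉). -/

import Mathlib

/-- In the comb tree `s_n` (a right-leaning spine of `2^n` `f`-nodes, the `i`-th of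
which has first child the constant `l(i)` with `l(i)` determined by `i mod 5`):
for each `x ∈ {a,b,c,d,e}` (i.e. each residue `c < 5`), the number of occurrences of
the digram `(f,1,x)` — nodes `[2]^i` with `i ≡ c (mod 5)`, `0 ≤ i < 2^n` — is at most
`⌈2^n/5⌉ = (2^n + 4)/5`, while the digram `(f,2,f)` — whose occurrence candidates are
the `2^n - 1` positions `0,...,2^n - 2` with consecutive positions overlapping — has a
maximum non-overlapping occurrence set of size exactly `2^(n-1)`; and for `n ≥ 3`,
`2^(n-1) > ⌈2^n/5⌉`. -/
theorem stmt13 (n : ℕ) (hn : 3 ≤ n) :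
    (∀ c : ℕ, c < 5 →
      ((Finset.range (2 ^ n)).filter (fun i => i % 5 = c)).card ≤ (2 ^ n + 4) / 5) ∧
    (∃ S : Finset ℕ, S ⊆ Finset.range (2 ^ n - 1) ∧ (∀ a ∈ S, a + 1 ∉ S) ∧
        S.card = 2 ^ (n - 1)) ∧
    (∀ T : Finset ℕ, T ⊆ Finset.range (2 ^ n - 1) → (∀ a ∈ T, a + 1 ∉ T) →
        T.card ≤ 2 ^ (n - 1)) ∧
    (2 ^ n + 4) / 5 < 2 ^ (n - 1) := by
  have hpow : 2 ^ n = 2 * 2 ^ (n - 1) := by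
    rw [← pow_succ']
    congr 1
    omega
  refine ⟨?_, ?_, ?_, ?_⟩
  · intro c hc
    have key : ((Finset.range (2 ^ n)).filter (fun i => i % 5 = c)).card ≤
        (Finset.range ((2 ^ n + 4) / 5)).card := by
      apply Finset.card_le_card_of_injOn (fun i => i / 5)
      · intro i hi
        simp only [Finset.mem_coe, Finset.mem_filter, Finset.mem_range] at hi ⊢
        omega
      · intro i hi j hj hij
        simp only [Finset.mem_coe, Finset.mem_filter, Finset.mem_range] at hi hj
        simp only at hij
        omega
    simpa using key
  · refine ⟨(Finset.range (2 ^ (n - 1))).image (2 * ·), ?_, ?_, ?_⟩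
    · intro x hx
      simp only [Finset.mem_image, Finset.mem_range] at hx ⊢
      obtain ⟨k, hk, rfl⟩ := hx
      omega
    · intro a ha hb
      simp only [Finset.mem_image, Finset.mem_range] at ha hb
      obtain ⟨k, _, rfl⟩ := ha
      obtain ⟨m, _, hm⟩ := hb
      omega
    · rw [Finset.card_image_of_injective _ (fun a b h => by omega)]
      simp
  · intro T hT hadj
    have key : T.card ≤ (Finset.range (2 ^ (n - 1))).card := by
      apply Finset.card_le_card_of_injOn (fun i => i / 2)
      · intro i hi
        have hi' := hT hi
        simp only [Finset.mem_coe, Finset.mem_range] at hi' ⊢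
        omega
      · intro i hi j hj hij
        simp only [Finset.mem_coe] at hi hj
        simp only at hij
        by_contra hne
        rcases Nat.lt_or_ge i j with h | h
        · have hj' : j = i + 1 := by omega
          exact hadj i hi (hj' ▸ hj)
        · have hi'' : i = j + 1 := by omega
          exact hadj j hj (hi'' ▸ hi)
    simpa using key
  · rw [Nat.div_lt_iff_lt_mul (by norm_num)]
    have : 4 ≤ 2 ^ (n - 1) := by
      calc (4 : ℕ) = 2 ^ 2 := rfl
      _ ≤ 2 ^ (n - 1) := Nat.pow_le_pow_right (by norm_num) (by omega)
    omega
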